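/- Let p be a prime, let L be a normed field that is a normed ℚ_p-algebra and is finite-dimensional over ℚ_p, let c₀ ≥ 1 be a natural number, and let λ ∈ L be an element that is not in the image of ℤ_p under the canonical map ℤ_p → ℚ_p → L. Then there exists a strictly increasing sequence of positive integers k₀ < k₁ < k₂ < ⋯ such that for every i: (a) k_i ≥ c₀·(2 + ⌈log_p k_{i+1}⌉) + 1, and (b) for every integer n with k_i ≤ n < k_{i+1} one has ‖λ − n‖ > p^{−⌈log_p k_{i+1}⌉} (i.e. no such integer n is congruent to λ modulo p^{⌈log_p k_{i+1}⌉}). -/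

import Mathlib

/-!
The image of `ℤ_p` in `L` is compact, hence closed, and contains every integer; so a point `λ`
outside it stays at some distance `δ > 0` from all integers. Taking `k i = p ^ (M + i)` gives
`⌈log_p k_{i+1}⌉ = M + i + 1`: for `M` large, `p ^ -(M + i + 1) < δ`, and the linear bound
`c₀ (M + i + 3) + 1` is beaten by the exponential `p ^ (M + i)`.
-/

open Filter

theorem Nat.mul_self_le_two_pow {m : ℕ} (hm : 4 ≤ m) : m * m ≤ 2 ^ m := by
  induction m, hm using Nat.le_induction with
  | base => norm_num
  | succ n hn ih =>
    calc (n + 1) * (n + 1) ≤ 2 * (n * n) := by nlinarith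
      _ ≤ 2 ^ (n + 1) := by rw [pow_succ]; omega

theorem Nat.eventually_mul_add_le_pow (c : ℕ) {p : ℕ} (hp : 1 < p) :
    ∀ᶠ m in atTop, c * (m + 3) + 1 ≤ p ^ m := by
  filter_upwards [eventually_ge_atTop (2 * c + 6)] with m hm
  calc c * (m + 3) + 1 ≤ m * m := by nlinarith
    _ ≤ 2 ^ m := Nat.mul_self_le_two_pow (by omega)
    _ ≤ p ^ m := Nat.pow_le_pow_left hp m

section

variable {p : ℕ} [Fact p.Prime] {L : Type*} [NormedRing L] [NormedAlgebra ℚ_[p] L]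

theorem isCompact_range_algebraMap_padicInt :
    IsCompact (Set.range fun x : ℤ_[p] => algebraMap ℚ_[p] L x) :=
  -- `X := ℤ_[p]` forces the topology carrying the `CompactSpace` instance, not the subtype one.
  isCompact_range (X := ℤ_[p]) ((continuous_algebraMap ℚ_[p] L).comp continuous_subtype_val)

theorem exists_pos_le_norm_sub_intCast {l : L}
    (hl : l ∉ Set.range fun x : ℤ_[p] => algebraMap ℚ_[p] L x) :
    ∃ δ > 0, ∀ n : ℤ, δ ≤ ‖l - n‖ := by
  set S := Set.range fun x : ℤ_[p] => algebraMap ℚ_[p] L x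
  have hS : IsClosed S := isCompact_range_algebraMap_padicInt.isClosed
  have hint (n : ℤ) : (n : L) ∈ S := ⟨n, by simp⟩
  refine ⟨Metric.infDist l S, (hS.notMem_iff_infDist_pos ⟨_, hint 0⟩).1 hl, fun n => ?_⟩
  simpa [dist_eq_norm] using Metric.infDist_le_dist_of_mem (x := l) (hint n)

theorem eventually_zpow_neg_lt_norm_sub_intCast {l : L}
    (hl : l ∉ Set.range fun x : ℤ_[p] => algebraMap ℚ_[p] L x) :
    ∀ᶠ m : ℕ in atTop, ∀ n : ℤ, (p : ℝ) ^ (-(m : ℤ)) < ‖l - n‖ := by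
  obtain ⟨δ, hδ, hle⟩ := exists_pos_le_norm_sub_intCast hl
  have hp : (1 : ℝ) < p := by exact_mod_cast (Fact.out : p.Prime).one_lt
  have htend : Tendsto (fun m : ℕ => (p : ℝ)⁻¹ ^ m) atTop (nhds 0) :=
    tendsto_pow_atTop_nhds_zero_of_lt_one (by positivity) (inv_lt_one_of_one_lt₀ hp)
  filter_upwards [htend.eventually (gt_mem_nhds hδ)] with m hm n
  rw [zpow_neg, zpow_natCast, ← inv_pow]
  exact hm.trans_le (hle n)

end

theorem exists_good_sequence_not_padicInt_general
    {p : ℕ} [Fact p.Prime] {L : Type*} [NormedField L] [NormedAlgebra ℚ_[p] L]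
    (c₀ : ℕ) (l : L)
    (hl : l ∉ Set.range (fun x : ℤ_[p] => algebraMap ℚ_[p] L (x : ℚ_[p]))) :
    ∃ k : ℕ → ℕ, StrictMono k ∧ (∀ i, 0 < k i) ∧
      ∀ i, c₀ * (2 + Nat.clog p (k (i + 1))) + 1 ≤ k i ∧
        ∀ n : ℤ, (k i : ℤ) ≤ n → n < (k (i + 1) : ℤ) →
          (p : ℝ) ^ (-(Nat.clog p (k (i + 1)) : ℤ)) < ‖l - (n : L)‖ := by
  have hp : 1 < p := (Fact.out : p.Prime).one_lt
  obtain ⟨M, hM⟩ := eventually_atTop.1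
    ((Nat.eventually_mul_add_le_pow c₀ hp).and (eventually_zpow_neg_lt_norm_sub_intCast hl))
  refine ⟨fun i => p ^ (M + i), (pow_right_strictMono₀ hp).comp (strictMono_id.const_add M),
    fun i => by positivity, fun i => ?_⟩
  rw [Nat.clog_pow p _ hp, show 2 + (M + (i + 1)) = M + i + 3 by omega]
  exact ⟨(hM (M + i) (by omega)).1, fun n _ _ => (hM _ (by omega)).2 n⟩

/-- Lemma 4.2 in case (1) of condition (*): if `λ` lies in a finite extension `L` of `ℚ_p`
but not in (the image of) `ℤ_p`, then there is a strictly increasing sequence of positive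
integers `k₀ < k₁ < ⋯` with `k i ≥ c₀ (2 + ⌈log_p k_{i+1}⌉) + 1` and such that no integer
in `[k i, k (i+1))` is congruent to `λ` modulo `p^{⌈log_p k_{i+1}⌉}`. -/
theorem exists_good_sequence_not_padicInt
    {p : ℕ} [Fact p.Prime] {L : Type*} [NormedField L] [NormedAlgebra ℚ_[p] L]
    [FiniteDimensional ℚ_[p] L]
    (c₀ : ℕ) (hc₀ : 1 ≤ c₀) (l : L)
    (hl : l ∉ Set.range (fun x : ℤ_[p] => algebraMap ℚ_[p] L (x : ℚ_[p]))) :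
    ∃ k : ℕ → ℕ, StrictMono k ∧ (∀ i, 0 < k i) ∧
      ∀ i, c₀ * (2 + Nat.clog p (k (i + 1))) + 1 ≤ k i ∧
        ∀ n : ℤ, (k i : ℤ) ≤ n → n < (k (i + 1) : ℤ) →
          (p : ℝ) ^ (-(Nat.clog p (k (i + 1)) : ℤ)) < ‖l - (n : L)‖ :=
  exists_good_sequence_not_padicInt_general c₀ l hl
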